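/- arXiv:2512.23265 — 2 statements merged into one kernel-verified Lean document; each statement's English description precedes it below -/
import Mathlib

section
/- For D ≥ 2 there exist two distinct jointly Gaussian couplings π ≠ π' on ℝ^D × ℝ^D having the same Gaussian marginals p₀ = N(μ₀,Σ₀) and p₁ = N(μ₁,Σ₁), and such that the law of (1−t)X₀ + tX₁ is the same under π and π' for every t ∈ [0,1]. (E.g., with Σ₀ = Σ₁ = I, take S antisymmetric nonzero with small norm and S' = 0.) -/
open MeasureTheory Complex Matrix

/-- `μ` is the Gaussian measure on `ℝ^D` with mean `m` and covariance `C`,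
characterized by its characteristic function. -/
def IsGaussianWith {D : ℕ} (μ : Measure (Fin D → ℝ)) (m : Fin D → ℝ)
    (C : Matrix (Fin D) (Fin D) ℝ) : Prop :=
  ∀ ξ : Fin D → ℝ,
    ∫ x, Complex.exp (Complex.I * (ξ ⬝ᵥ x : ℝ)) ∂μ =
      Complex.exp (Complex.I * (ξ ⬝ᵥ m : ℝ) - ((ξ ⬝ᵥ C.mulVec ξ : ℝ) : ℂ) / 2)

/-- `π` is the jointly Gaussian measure on `ℝ^D × ℝ^D` with means `μ₀, μ₁` and
block covariance `[[Sig0, S], [Sᵀ, Sig1]]`, characterized by its characteristic function. -/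
def IsJointGaussianWith {D : ℕ} (π : Measure ((Fin D → ℝ) × (Fin D → ℝ)))
    (μ₀ μ₁ : Fin D → ℝ) (Sig0 Sig1 S : Matrix (Fin D) (Fin D) ℝ) : Prop :=
  ∀ ξ₀ ξ₁ : Fin D → ℝ,
    ∫ p, Complex.exp (Complex.I * ((ξ₀ ⬝ᵥ p.1 + ξ₁ ⬝ᵥ p.2 : ℝ))) ∂π =
      Complex.exp (Complex.I * ((ξ₀ ⬝ᵥ μ₀ + ξ₁ ⬝ᵥ μ₁ : ℝ)) -
        (((ξ₀ ⬝ᵥ Sig0.mulVec ξ₀ + 2 * (ξ₀ ⬝ᵥ S.mulVec ξ₁) + ξ₁ ⬝ᵥ Sig1.mulVec ξ₁ : ℝ)) : ℂ) / 2)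


/-! If `g` is a standard Gaussian vector and `M` a matrix, then `(g, M g)` is jointly Gaussian
with cross-covariance `Mᵀ`, and `(g, Mᵀ g)` with cross-covariance `M`. When `M` commutes with
`Mᵀ` the two couplings have the same marginals `N(0, 1)` and `N(0, M Mᵀ)`. The characteristic
function of `a X₀ + b X₁` sees the cross-covariance `S` only through the quadratic form
`ξ ↦ ξ ⬝ᵥ S *ᵥ ξ`, i.e. through `S + Sᵀ`, which is `M + Mᵀ` in both cases; so all interpolants
agree, while the couplings differ as soon as `M ≠ Mᵀ`. For `D ≥ 2` take `M = 1 + J` with `J` a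
nonzero antisymmetric matrix. -/

open ProbabilityTheory

lemma isGaussianWith_pi_gaussianReal (n : ℕ) :
    IsGaussianWith (Measure.pi fun _ : Fin n => gaussianReal 0 1) 0 1 := by
  intro ξ
  rw [dotProduct_zero, one_mulVec]
  have h1d (i : Fin n) (x : ℝ) : cexp (I * ((ξ i * x : ℝ) : ℂ)) = cexp (ξ i * x * I) := by
    push_cast; ring_nf
  simp_rw [dotProduct, ofReal_sum, Finset.mul_sum, exp_sum, h1d]
  rw [integral_fintype_prod_eq_prod (f := fun i (x : ℝ) => cexp (ξ i * x * I))]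
  simp_rw [← charFun_apply_real, charFun_gaussianReal, ← exp_sum]
  simp [Finset.sum_div, pow_two]

lemma ext_of_integral_exp_dotProduct {ι : Type*} [Fintype ι] {μ ν : Measure (ι → ℝ)}
    [IsFiniteMeasure μ] [IsFiniteMeasure ν]
    (h : ∀ ξ : ι → ℝ, ∫ x, cexp (I * (ξ ⬝ᵥ x : ℝ)) ∂μ = ∫ x, cexp (I * (ξ ⬝ᵥ x : ℝ)) ∂ν) :
    μ = ν := by
  classical
  refine Measure.ext_of_charFunDual (funext fun L => ?_)
  obtain ⟨ξ, hξ⟩ : ∃ ξ : ι → ℝ, ∀ x, L x = ξ ⬝ᵥ x :=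
    ⟨fun i => L fun j => if i = j then 1 else 0, fun x => by
      simpa [dotProduct, mul_comm] using L.toLinearMap.pi_apply_eq_sum_univ x⟩
  simp_rw [charFunDual_apply, hξ, mul_comm _ I]
  exact h ξ

lemma isJointGaussianWith_map_mulVec {D n : ℕ} (A B : Matrix (Fin D) (Fin n) ℝ) :
    IsJointGaussianWith ((Measure.pi fun _ : Fin n => gaussianReal 0 1).map
      fun g => (A *ᵥ g, B *ᵥ g)) 0 0 (A * Aᵀ) (B * Bᵀ) (A * Bᵀ) := by
  intro ξ₀ ξ₁
  rw [integral_map (by fun_prop) (by fun_prop)]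
  have hlin (g : Fin n → ℝ) : ξ₀ ⬝ᵥ A *ᵥ g + ξ₁ ⬝ᵥ B *ᵥ g = (ξ₀ ᵥ* A + ξ₁ ᵥ* B) ⬝ᵥ g := by
    rw [dotProduct_mulVec, dotProduct_mulVec, add_dotProduct]
  have hgram (x y : Fin D → ℝ) (P Q : Matrix (Fin D) (Fin n) ℝ) :
      x ⬝ᵥ (P * Qᵀ) *ᵥ y = (x ᵥ* P) ⬝ᵥ (y ᵥ* Q) := by
    rw [← mulVec_mulVec, dotProduct_mulVec, mulVec_transpose]
  simp_rw [hlin]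
  rw [isGaussianWith_pi_gaussianReal n]
  simp only [one_mulVec, hgram, dotProduct_zero, add_zero, add_dotProduct, dotProduct_add,
    dotProduct_comm (ξ₁ ᵥ* B) (ξ₀ ᵥ* A)]
  push_cast
  ring_nf

namespace IsJointGaussianWith

variable {D : ℕ} {π π' : Measure ((Fin D → ℝ) × (Fin D → ℝ))} {μ₀ μ₁ : Fin D → ℝ}
  {Sig0 Sig1 S S' : Matrix (Fin D) (Fin D) ℝ}

lemma isGaussianWith_map_fst (h : IsJointGaussianWith π μ₀ μ₁ Sig0 Sig1 S) :
    IsGaussianWith (π.map Prod.fst) μ₀ Sig0 := by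
  intro ξ
  rw [integral_map measurable_fst.aemeasurable (by fun_prop)]
  simpa using h ξ 0

lemma isGaussianWith_map_snd (h : IsJointGaussianWith π μ₀ μ₁ Sig0 Sig1 S) :
    IsGaussianWith (π.map Prod.snd) μ₁ Sig1 := by
  intro ξ
  rw [integral_map measurable_snd.aemeasurable (by fun_prop)]
  simpa using h 0 ξ

lemma crossCov_unique (h : IsJointGaussianWith π μ₀ μ₁ Sig0 Sig1 S)
    (h' : IsJointGaussianWith π μ₀ μ₁ Sig0 Sig1 S') : S = S' := by
  -- the modulus of `exp (I * r - q / 2)` is `Real.exp (-q / 2)`, which determines `q`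
  have hform (ξ₀ ξ₁ : Fin D → ℝ) : ξ₀ ⬝ᵥ S *ᵥ ξ₁ = ξ₀ ⬝ᵥ S' *ᵥ ξ₁ := by
    have := congrArg (‖·‖) ((h ξ₀ ξ₁).symm.trans (h' ξ₀ ξ₁))
    simpa [Complex.norm_exp] using this
  refine ext_iff_mulVec.2 fun ξ₁ => dotProduct_eq _ _ fun ξ₀ => ?_
  rw [dotProduct_comm, hform, dotProduct_comm]

lemma map_smul_add_smul_eq [IsFiniteMeasure π] [IsFiniteMeasure π']
    (h : IsJointGaussianWith π μ₀ μ₁ Sig0 Sig1 S) (h' : IsJointGaussianWith π' μ₀ μ₁ Sig0 Sig1 S')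
    (hS : S + Sᵀ = S' + S'ᵀ) (a b : ℝ) :
    π.map (fun p => a • p.1 + b • p.2) = π'.map (fun p => a • p.1 + b • p.2) := by
  have hquad (x : Fin D → ℝ) : x ⬝ᵥ S *ᵥ x = x ⬝ᵥ S' *ᵥ x := by
    have := congrArg (fun M => x ⬝ᵥ M *ᵥ x) hS
    simp only [add_mulVec, dotProduct_add, mulVec_transpose, ← dotProduct_mulVec,
      dotProduct_comm x (x ᵥ* _)] at this
    linarith
  have hlin (ξ : Fin D → ℝ) (p : (Fin D → ℝ) × (Fin D → ℝ)) :
      ξ ⬝ᵥ (a • p.1 + b • p.2) = (a • ξ) ⬝ᵥ p.1 + (b • ξ) ⬝ᵥ p.2 := by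
    simp [dotProduct_add, dotProduct_smul, smul_dotProduct]
  refine ext_of_integral_exp_dotProduct fun ξ => ?_
  rw [integral_map (by fun_prop) (by fun_prop), integral_map (by fun_prop) (by fun_prop)]
  simp_rw [hlin]
  rw [h (a • ξ) (b • ξ), h' (a • ξ) (b • ξ)]
  simp only [mulVec_smul, dotProduct_smul, smul_dotProduct, hquad]

end IsJointGaussianWith

lemma exists_mul_transpose_comm_ne_transpose {n : Type*} [Fintype n] [DecidableEq n]
    [Nontrivial n] : ∃ M : Matrix n n ℝ, M * Mᵀ = Mᵀ * M ∧ M ≠ Mᵀ := by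
  obtain ⟨i, j, hij⟩ := exists_pair_ne n
  set J : Matrix n n ℝ := single i j 1 - single j i 1 with hJ_def
  have hJ : Jᵀ = -J := by simp [hJ_def, transpose_single]
  refine ⟨1 + J, ?_, fun h => ?_⟩
  · rw [transpose_add, transpose_one, hJ]
    noncomm_ring
  · have := congrFun₂ h i j
    norm_num [hJ_def, hij, hij.symm] at this

theorem exists_distinct_couplings_same_interpolants {D : ℕ} (hD : 2 ≤ D) :
    ∃ (μ₀ μ₁ : Fin D → ℝ) (Sig0 Sig1 S S' : Matrix (Fin D) (Fin D) ℝ)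
      (π π' : Measure ((Fin D → ℝ) × (Fin D → ℝ))),
      IsProbabilityMeasure π ∧ IsProbabilityMeasure π' ∧
      IsJointGaussianWith π μ₀ μ₁ Sig0 Sig1 S ∧
      IsJointGaussianWith π' μ₀ μ₁ Sig0 Sig1 S' ∧
      π ≠ π' ∧
      IsGaussianWith (π.map Prod.fst) μ₀ Sig0 ∧
      IsGaussianWith (π.map Prod.snd) μ₁ Sig1 ∧
      IsGaussianWith (π'.map Prod.fst) μ₀ Sig0 ∧
      IsGaussianWith (π'.map Prod.snd) μ₁ Sig1 ∧
      ∀ t ∈ Set.Icc (0:ℝ) 1,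
        π.map (fun p => (1 - t) • p.1 + t • p.2) =
        π'.map (fun p => (1 - t) • p.1 + t • p.2) := by
  have : Nontrivial (Fin D) := Fin.nontrivial_iff_two_le.2 hD
  obtain ⟨M, hM, hne⟩ := exists_mul_transpose_comm_ne_transpose (n := Fin D)
  have h := isJointGaussianWith_map_mulVec 1 M
  have h' := isJointGaussianWith_map_mulVec 1 Mᵀ
  rw [transpose_transpose, ← hM] at h'
  simp only [transpose_one, one_mul, one_mulVec] at h h'
  have hprob (N : Matrix (Fin D) (Fin D) ℝ) :
      IsProbabilityMeasure ((Measure.pi fun _ : Fin D => gaussianReal 0 1).map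
        fun g => (g, N *ᵥ g)) :=
    Measure.isProbabilityMeasure_map (by fun_prop)
  refine ⟨_, _, _, _, _, _, _, _, hprob M, hprob Mᵀ, h, h', fun heq => hne ?_,
    h.isGaussianWith_map_fst, h.isGaussianWith_map_snd, h'.isGaussianWith_map_fst,
    h'.isGaussianWith_map_snd, fun t _ => h.map_smul_add_smul_eq h' ?_ _ _⟩
  · rw [← heq] at h'
    exact (h.crossCov_unique h').symm
  · rw [transpose_transpose, add_comm]
end

section
/- Let p₀, p₁ be probability measures on ℝ with finite exponential moments, and let π, π' ∈ Π(p₀,p₁). Suppose the laws of (1−t)X₀ + tX₁ agree under π and π' for all t in a dense subset of [0,1]. Then they agree for all t ∈ [0,1], and hence π = π'. -/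
/-!
Write `F_μ(z, w) = ∫ exp (z x + w y) dμ(x, y)`. Exponential moments make `F_π` and `F_π'`
holomorphic along complex lines with real slope through the strip `|Re z|, |Re w| < c`.
Equal laws of `(1 - t) X₀ + t X₁` give `F_π = F_π'` at `((1 - t) σ, t σ)` for `t ∈ T`; as `T`
accumulates at `1/2`, the identity theorem on the line `ζ ↦ ((1 - ζ) σ, ζ σ)` yields equality at
`(σ - i y, i y)` for every small `σ > 0`, and a second continuation along `ζ ↦ (ζ - i y, i y)`
reaches `(i x, i y)`. Hence `π` and `π'` have the same characteristic function.
-/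

open MeasureTheory Set Filter Topology Complex

section IntegralCExp

variable {Ω : Type*} [MeasurableSpace Ω]

/-- The margin `ε * |v|` dominates the derivative when `ζ ↦ ∫ exp (u + ζ v) dμ` is
differentiated under the integral sign at `ζ.re = s`. -/
def expMarginSet (u : Ω → ℂ) (v : Ω → ℝ) (μ : Measure Ω) : Set ℝ :=
  {s | ∃ ε > 0, Integrable (fun ω ↦ Real.exp ((u ω).re + s * v ω + ε * |v ω|)) μ}

variable {μ : Measure Ω} {u : Ω → ℂ} {v : Ω → ℝ}

lemma mem_expMarginSet_of_le (hu : Measurable u) (hv : Measurable v) {g : Ω → ℝ}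
    (hg : Integrable (fun ω ↦ Real.exp (g ω)) μ) {s ε : ℝ} (hε : 0 < ε)
    (hle : ∀ ω, (u ω).re + s * v ω + ε * |v ω| ≤ g ω) :
    s ∈ expMarginSet u v μ :=
  ⟨ε, hε, hg.mono' (by fun_prop) (ae_of_all _ fun ω ↦ by
    rw [Real.norm_of_nonneg (Real.exp_nonneg _)]
    exact Real.exp_le_exp.2 (hle ω))⟩

lemma isOpen_expMarginSet (hu : Measurable u) (hv : Measurable v) :
    IsOpen (expMarginSet u v μ) := by
  refine Metric.isOpen_iff.2 fun s ⟨ε, hε, hint⟩ ↦ ⟨ε / 2, by positivity, fun s' hs' ↦ ?_⟩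
  refine mem_expMarginSet_of_le hu hv hint (half_pos hε) fun ω ↦ ?_
  have : (s' - s) * v ω ≤ ε / 2 * |v ω| := by
    refine (le_abs_self _).trans ?_
    rw [abs_mul]
    exact mul_le_mul_of_nonneg_right (le_of_lt hs') (abs_nonneg _)
  linarith

lemma ordConnected_expMarginSet (hu : Measurable u) (hv : Measurable v) :
    (expMarginSet u v μ).OrdConnected := by
  refine ⟨fun s₁ ⟨ε₁, hε₁, h₁⟩ s₂ ⟨ε₂, hε₂, h₂⟩ s ⟨hs₁, hs₂⟩ ↦
    ⟨min ε₁ ε₂, lt_min hε₁ hε₂, (h₁.add h₂).mono' (by fun_prop) (ae_of_all _ fun ω ↦ ?_)⟩⟩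
  rw [Real.norm_of_nonneg (Real.exp_nonneg _)]
  have hmin : min ε₁ ε₂ * |v ω| ≤ ε₁ * |v ω| ∧ min ε₁ ε₂ * |v ω| ≤ ε₂ * |v ω| :=
    ⟨by gcongr; exact min_le_left _ _, by gcongr; exact min_le_right _ _⟩
  rcases le_total 0 (v ω) with hv₀ | hv₀
  · have : s * v ω ≤ s₂ * v ω := mul_le_mul_of_nonneg_right hs₂ hv₀
    exact (Real.exp_le_exp.2 (by linarith)).trans (le_add_of_nonneg_left (Real.exp_nonneg _))
  · have : s * v ω ≤ s₁ * v ω := mul_le_mul_of_nonpos_right hs₁ hv₀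
    exact (Real.exp_le_exp.2 (by linarith)).trans (le_add_of_nonneg_right (Real.exp_nonneg _))

lemma hasDerivAt_integral_cexp (hu : Measurable u) (hv : Measurable v) {ζ₀ : ℂ}
    (hζ₀ : ζ₀.re ∈ expMarginSet u v μ) :
    HasDerivAt (fun ζ ↦ ∫ ω, cexp (u ω + ζ * v ω) ∂μ)
      (∫ ω, cexp (u ω + ζ₀ * v ω) * v ω ∂μ) ζ₀ := by
  obtain ⟨ε, hε, hint⟩ := hζ₀
  have norm_cexp : ∀ ζ ω, ‖cexp (u ω + ζ * v ω)‖ = Real.exp ((u ω).re + ζ.re * v ω) := by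
    intro ζ ω
    simp [Complex.norm_exp]
  refine (hasDerivAt_integral_of_dominated_loc_of_deriv_le
    (Metric.ball_mem_nhds ζ₀ (half_pos hε)) (F := fun ζ ω ↦ cexp (u ω + ζ * v ω))
    (F' := fun ζ ω ↦ cexp (u ω + ζ * v ω) * v ω)
    (bound := fun ω ↦ 2 / ε * Real.exp ((u ω).re + ζ₀.re * v ω + ε * |v ω|))
    (.of_forall fun ζ ↦ by fun_prop) ?_ (by fun_prop) (ae_of_all _ fun ω ζ hζ ↦ ?_)
    (hint.const_mul _) (ae_of_all _ fun ω ζ _ ↦ ?_)).2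
  · refine hint.mono' (by fun_prop) (ae_of_all _ fun ω ↦ ?_)
    rw [norm_cexp]
    exact Real.exp_le_exp.2 (le_add_of_nonneg_right (by positivity))
  · have hre : (ζ.re - ζ₀.re) * v ω ≤ ε / 2 * |v ω| := by
      refine (le_abs_self _).trans ?_
      rw [abs_mul]
      refine mul_le_mul_of_nonneg_right ?_ (abs_nonneg _)
      rw [← Complex.sub_re]
      exact (Complex.abs_re_le_norm _).trans (le_of_lt (mem_ball_iff_norm.1 hζ))
    have hlin : |v ω| ≤ 2 / ε * Real.exp (ε / 2 * |v ω|) := by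
      rw [div_mul_eq_mul_div, le_div_iff₀ hε]
      linarith [Real.add_one_le_exp (ε / 2 * |v ω|)]
    calc ‖cexp (u ω + ζ * v ω) * v ω‖
        = Real.exp ((u ω).re + ζ.re * v ω) * |v ω| := by
          rw [norm_mul, norm_cexp, Complex.norm_real, Real.norm_eq_abs]
      _ ≤ Real.exp ((u ω).re + ζ₀.re * v ω + ε / 2 * |v ω|) *
            (2 / ε * Real.exp (ε / 2 * |v ω|)) :=
          mul_le_mul (Real.exp_le_exp.2 (by linarith)) hlin (abs_nonneg _) (Real.exp_nonneg _)
      _ = 2 / ε * Real.exp ((u ω).re + ζ₀.re * v ω + ε * |v ω|) := by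
          rw [mul_left_comm, ← Real.exp_add]
          ring_nf
  · exact (((hasDerivAt_id ζ).mul_const (v ω : ℂ)).const_add (u ω)).cexp.congr_deriv (by simp)

lemma analyticOnNhd_integral_cexp (hu : Measurable u) (hv : Measurable v) :
    AnalyticOnNhd ℂ (fun ζ ↦ ∫ ω, cexp (u ω + ζ * v ω) ∂μ) (re ⁻¹' expMarginSet u v μ) :=
  DifferentiableOn.analyticOnNhd
    (fun _ hζ ↦ (hasDerivAt_integral_cexp hu hv hζ).differentiableAt.differentiableWithinAt)
    ((isOpen_expMarginSet hu hv).preimage continuous_re)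

lemma eqOn_integral_cexp_of_frequently_eq (hu : Measurable u) (hv : Measurable v)
    {μ' : Measure Ω} {ζ₀ : ℂ} (hζ₀ : ζ₀.re ∈ expMarginSet u v μ ∩ expMarginSet u v μ')
    (h : ∃ᶠ ζ in 𝓝[≠] ζ₀, ∫ ω, cexp (u ω + ζ * v ω) ∂μ = ∫ ω, cexp (u ω + ζ * v ω) ∂μ') :
    EqOn (fun ζ ↦ ∫ ω, cexp (u ω + ζ * v ω) ∂μ) (fun ζ ↦ ∫ ω, cexp (u ω + ζ * v ω) ∂μ')
      (re ⁻¹' (expMarginSet u v μ ∩ expMarginSet u v μ')) := by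
  have hconn : IsPreconnected (re ⁻¹' (expMarginSet u v μ ∩ expMarginSet u v μ')) :=
    (((ordConnected_expMarginSet hu hv).inter
      (ordConnected_expMarginSet hu hv)).convex.linear_preimage reLm).isPreconnected
  exact ((analyticOnNhd_integral_cexp hu hv).mono (preimage_mono inter_subset_left))
    |>.eqOn_of_preconnected_of_frequently_eq
      ((analyticOnNhd_integral_cexp hu hv).mono (preimage_mono inter_subset_right)) hconn hζ₀ h

end IntegralCExp

lemma frequently_nhdsNE_mem_of_subset_closure {X : Type*} [TopologicalSpace X] [T1Space X]
    {x : X} [(𝓝[≠] x).NeBot] {s T : Set X} (hs : s ∈ 𝓝 x) (hsT : s ⊆ closure T) :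
    ∃ᶠ y in 𝓝[≠] x, y ∈ T := by
  rw [Filter.frequently_iff]
  intro U hU
  obtain ⟨V, hVopen, hxV, hVU⟩ := mem_nhdsWithin.1 hU
  have hW : V ∩ interior s ∩ {x}ᶜ ∈ 𝓝[≠] x :=
    inter_mem (mem_nhdsWithin_of_mem_nhds (inter_mem (hVopen.mem_nhds hxV)
      (interior_mem_nhds.2 hs))) self_mem_nhdsWithin
  obtain ⟨y, hyW⟩ := Filter.nonempty_of_mem hW
  obtain ⟨z, ⟨⟨hzV, -⟩, hzx⟩, hzT⟩ := mem_closure_iff.1 (hsT (interior_subset hyW.1.2)) _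
    ((hVopen.inter isOpen_interior).inter isOpen_compl_singleton) hyW
  exact ⟨z, hVU ⟨hzV, hzx⟩, hzT⟩

lemma frequently_nhdsNE_ofReal {p : ℂ → Prop} {x : ℝ} (h : ∃ᶠ t : ℝ in 𝓝[≠] x, p t) :
    ∃ᶠ ζ in 𝓝[≠] (x : ℂ), p ζ :=
  (continuous_ofReal.continuousWithinAt.tendsto_nhdsWithin fun _ _ ↦ by simp_all).frequently h

section JointMGF

noncomputable def jointComplexMGF (μ : Measure (ℝ × ℝ)) (z w : ℂ) : ℂ :=
  ∫ p, cexp (z * p.1 + w * p.2) ∂μ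

variable {π π' : Measure (ℝ × ℝ)}

lemma jointComplexMGF_eq_of_map_eq {t : ℝ}
    (h : π.map (fun p ↦ (1 - t) * p.1 + t * p.2) = π'.map (fun p ↦ (1 - t) * p.1 + t * p.2))
    (ζ : ℂ) :
    jointComplexMGF π ((1 - t) * ζ) (t * ζ) = jointComplexMGF π' ((1 - t) * ζ) (t * ζ) := by
  have hline : ∀ μ : Measure (ℝ × ℝ), jointComplexMGF μ ((1 - t) * ζ) (t * ζ) =
      ∫ x, cexp (ζ * x) ∂(μ.map fun p ↦ (1 - t) * p.1 + t * p.2) := by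
    intro μ
    rw [integral_map (by fun_prop) (by fun_prop), jointComplexMGF]
    congr with p
    push_cast
    ring_nf
  rw [hline, hline, h]

lemma integrable_exp_abs_add_abs {l : ℝ} (hl : 0 < l)
    (h₀ : Integrable (fun x ↦ Real.exp (l * |x|)) (π.map Prod.fst))
    (h₁ : Integrable (fun x ↦ Real.exp (l * |x|)) (π.map Prod.snd)) :
    Integrable (fun p : ℝ × ℝ ↦ Real.exp (l / 2 * (|p.1| + |p.2|))) π := by
  refine ((h₀.comp_measurable measurable_fst).add (h₁.comp_measurable measurable_snd)).mono'
    (by fun_prop) (ae_of_all _ fun p ↦ ?_)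
  rw [Real.norm_of_nonneg (Real.exp_nonneg _)]
  simp only [Pi.add_apply, Function.comp_apply]
  rcases le_total |p.1| |p.2| with h | h
  · exact (Real.exp_le_exp.2 (by nlinarith)).trans (le_add_of_nonneg_left (Real.exp_nonneg _))
  · exact (Real.exp_le_exp.2 (by nlinarith)).trans (le_add_of_nonneg_right (Real.exp_nonneg _))

lemma ext_of_jointComplexMGF_mul_I_eq [IsFiniteMeasure π] [IsFiniteMeasure π']
    (h : ∀ x y : ℝ, jointComplexMGF π (x * I) (y * I) = jointComplexMGF π' (x * I) (y * I)) :
    π = π' := by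
  refine Measure.ext_of_charFunDual (funext fun L ↦ ?_)
  have hL : ∀ μ : Measure (ℝ × ℝ),
      charFunDual μ L = jointComplexMGF μ (L (1, 0) * I) (L (0, 1) * I) := by
    intro μ
    rw [charFunDual_apply, jointComplexMGF]
    congr with p
    have : L p = L (1, 0) * p.1 + L (0, 1) * p.2 := by
      conv_lhs => rw [show p = p.1 • (1, 0) + p.2 • (0, 1) by ext <;> simp]
      rw [map_add, map_smul, map_smul, smul_eq_mul, smul_eq_mul, mul_comm p.1, mul_comm p.2]
    rw [this]
    push_cast
    ring_nf
  rw [hL, hL, h]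

variable {c : ℝ}

lemma jointComplexMGF_sub_mul_I_eq
    (hd : Integrable (fun p : ℝ × ℝ ↦ Real.exp (c * (|p.1| + |p.2|))) π)
    (hd' : Integrable (fun p : ℝ × ℝ ↦ Real.exp (c * (|p.1| + |p.2|))) π')
    {σ : ℝ} (hσ : 0 < σ) (hσc : 2 * σ ≤ c) {T : Set ℝ} (hT : ∃ᶠ t in 𝓝[≠] (1 / 2 : ℝ), t ∈ T)
    (h : ∀ t ∈ T,
      jointComplexMGF π ((1 - t) * σ) (t * σ) = jointComplexMGF π' ((1 - t) * σ) (t * σ))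
    (y : ℝ) :
    jointComplexMGF π (σ - y * I) (y * I) = jointComplexMGF π' (σ - y * I) (y * I) := by
  set u : ℝ × ℝ → ℂ := fun p ↦ (σ * p.1 : ℝ)
  set v : ℝ × ℝ → ℝ := fun p ↦ σ * (p.2 - p.1)
  have hu : Measurable u := by fun_prop
  have hv : Measurable v := by fun_prop
  have hline : ∀ μ ζ,
      jointComplexMGF μ ((1 - ζ) * σ) (ζ * σ) = ∫ p, cexp (u p + ζ * v p) ∂μ := by
    intro μ ζ
    simp only [jointComplexMGF, u, v]
    congr with p
    push_cast
    ring_nf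
  have hJ : ∀ μ, Integrable (fun p : ℝ × ℝ ↦ Real.exp (c * (|p.1| + |p.2|))) μ →
      Icc 0 1 ⊆ expMarginSet u v μ := by
    refine fun μ hμ s ⟨hs₀, hs₁⟩ ↦ mem_expMarginSet_of_le hu hv hμ one_pos fun p ↦ ?_
    have hconv : (1 - s) * p.1 + s * p.2 ≤ |p.1| + |p.2| := by
      nlinarith [le_abs_self p.1, le_abs_self p.2, abs_nonneg p.1, abs_nonneg p.2]
    have hdiff : |v p| ≤ σ * (|p.1| + |p.2|) := by
      rw [abs_mul, abs_of_pos hσ, add_comm |p.1|]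
      exact mul_le_mul_of_nonneg_left (abs_sub _ _) hσ.le
    have hsum : 0 ≤ |p.1| + |p.2| := by positivity
    simp only [u, v, Complex.ofReal_re] at hdiff ⊢
    nlinarith
  have hhalf : (1 / 2 : ℝ) ∈ Icc (0 : ℝ) 1 := ⟨by norm_num, by norm_num⟩
  have heq := eqOn_integral_cexp_of_frequently_eq hu hv (μ := π) (μ' := π')
    (ζ₀ := ((1 / 2 : ℝ) : ℂ)) ⟨hJ π hd hhalf, hJ π' hd' hhalf⟩
    (frequently_nhdsNE_ofReal (hT.mono fun t ht ↦ by rw [← hline, ← hline]; exact h t ht))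
  have htarget : ((y / σ : ℝ) * I).re ∈ Icc (0 : ℝ) 1 := by simp
  have := heq (x := (y / σ : ℝ) * I) ⟨hJ π hd htarget, hJ π' hd' htarget⟩
  simp only [← hline] at this
  have hσ' : (σ : ℂ) ≠ 0 := by exact_mod_cast hσ.ne'
  convert this using 2 <;> push_cast <;> field_simp

lemma jointComplexMGF_mul_I_eq
    (hd : Integrable (fun p : ℝ × ℝ ↦ Real.exp (c * (|p.1| + |p.2|))) π)
    (hd' : Integrable (fun p : ℝ × ℝ ↦ Real.exp (c * (|p.1| + |p.2|))) π') (hc : 0 < c)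
    (h : ∀ σ ∈ Ioo 0 (c / 2), ∀ y : ℝ,
      jointComplexMGF π (σ - y * I) (y * I) = jointComplexMGF π' (σ - y * I) (y * I))
    (x y : ℝ) :
    jointComplexMGF π (x * I) (y * I) = jointComplexMGF π' (x * I) (y * I) := by
  set u : ℝ × ℝ → ℂ := fun p ↦ (y * (p.2 - p.1) : ℝ) * I
  have hu : Measurable u := by fun_prop
  have hline : ∀ μ ζ,
      jointComplexMGF μ (ζ - y * I) (y * I) = ∫ p, cexp (u p + ζ * p.1) ∂μ := by
    intro μ ζ
    simp only [jointComplexMGF, u]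
    congr with p
    push_cast
    ring_nf
  have hJ : ∀ μ, Integrable (fun p : ℝ × ℝ ↦ Real.exp (c * (|p.1| + |p.2|))) μ →
      Icc 0 (c / 2) ⊆ expMarginSet u Prod.fst μ := by
    refine fun μ hμ s ⟨hs₀, hs₁⟩ ↦
      mem_expMarginSet_of_le hu measurable_fst hμ (half_pos hc) fun p ↦ ?_
    have : s * p.1 ≤ s * |p.1| := mul_le_mul_of_nonneg_left (le_abs_self _) hs₀
    simp only [u, Complex.mul_I_re, Complex.ofReal_im, neg_zero]
    nlinarith [abs_nonneg p.1, abs_nonneg p.2]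
  have hquarter : c / 4 ∈ Icc 0 (c / 2) := ⟨by linarith, by linarith⟩
  have hfreq : ∃ᶠ σ : ℝ in 𝓝[≠] (c / 4), σ ∈ Ioo 0 (c / 2) :=
    (eventually_nhdsWithin_of_eventually_nhds
      (Ioo_mem_nhds (by linarith) (by linarith))).frequently
  have heq := eqOn_integral_cexp_of_frequently_eq hu measurable_fst (μ := π) (μ' := π')
    (ζ₀ := ((c / 4 : ℝ) : ℂ)) ⟨hJ π hd hquarter, hJ π' hd' hquarter⟩
    (frequently_nhdsNE_ofReal (hfreq.mono fun σ hσ ↦ by rw [← hline, ← hline]; exact h σ hσ y))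
  have htarget : (x * I + y * I).re ∈ Icc 0 (c / 2) := by simpa using (half_pos hc).le
  have := heq (x := x * I + y * I) ⟨hJ π hd htarget, hJ π' hd' htarget⟩
  simp only [← hline, add_sub_cancel_right] at this
  exact this

end JointMGF

theorem inverse_FM_unique_of_dense_times_general
    (p₀ p₁ : Measure ℝ)
    (hexp : ∃ l : ℝ, 0 < l ∧ Integrable (fun x => Real.exp (l * |x|)) p₀ ∧
      Integrable (fun x => Real.exp (l * |x|)) p₁)
    (π π' : Measure (ℝ × ℝ)) [IsProbabilityMeasure π] [IsProbabilityMeasure π']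
    (hπ0 : π.map Prod.fst = p₀) (hπ1 : π.map Prod.snd = p₁)
    (hπ'0 : π'.map Prod.fst = p₀) (hπ'1 : π'.map Prod.snd = p₁)
    (T : Set ℝ)
    (hTdense : Set.Icc (0:ℝ) 1 ⊆ closure T)
    (h : ∀ t ∈ T,
      π.map (fun p => (1 - t) * p.1 + t * p.2) =
      π'.map (fun p => (1 - t) * p.1 + t * p.2)) :
    (∀ t ∈ Set.Icc (0:ℝ) 1,
      π.map (fun p => (1 - t) * p.1 + t * p.2) =
      π'.map (fun p => (1 - t) * p.1 + t * p.2)) ∧ π = π' := by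
  obtain ⟨l, hl, h₀, h₁⟩ := hexp
  have hd := integrable_exp_abs_add_abs hl (by rwa [hπ0]) (by rwa [hπ1])
  have hd' := integrable_exp_abs_add_abs hl (by rwa [hπ'0]) (by rwa [hπ'1])
  have hT : ∃ᶠ t in 𝓝[≠] (1 / 2 : ℝ), t ∈ T :=
    frequently_nhdsNE_mem_of_subset_closure (Icc_mem_nhds (by norm_num) (by norm_num)) hTdense
  have hππ' : π = π' :=
    ext_of_jointComplexMGF_mul_I_eq <| jointComplexMGF_mul_I_eq hd hd' (half_pos hl)
      fun σ hσ ↦ jointComplexMGF_sub_mul_I_eq hd hd' hσ.1 (by linarith [hσ.2]) hT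
        fun t ht ↦ jointComplexMGF_eq_of_map_eq (h t ht) σ
  exact ⟨fun t _ ↦ by rw [hππ'], hππ'⟩

theorem inverse_FM_unique_of_dense_times
    (p₀ p₁ : Measure ℝ) [IsProbabilityMeasure p₀] [IsProbabilityMeasure p₁]
    (hexp : ∃ l : ℝ, 0 < l ∧ Integrable (fun x => Real.exp (l * |x|)) p₀ ∧
      Integrable (fun x => Real.exp (l * |x|)) p₁)
    (π π' : Measure (ℝ × ℝ)) [IsProbabilityMeasure π] [IsProbabilityMeasure π']
    (hπ0 : π.map Prod.fst = p₀) (hπ1 : π.map Prod.snd = p₁)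
    (hπ'0 : π'.map Prod.fst = p₀) (hπ'1 : π'.map Prod.snd = p₁)
    (T : Set ℝ) (hT : T ⊆ Set.Icc (0:ℝ) 1)
    (hTdense : Set.Icc (0:ℝ) 1 ⊆ closure T)
    (h : ∀ t ∈ T,
      π.map (fun p => (1 - t) * p.1 + t * p.2) =
      π'.map (fun p => (1 - t) * p.1 + t * p.2)) :
    (∀ t ∈ Set.Icc (0:ℝ) 1,
      π.map (fun p => (1 - t) * p.1 + t * p.2) =
      π'.map (fun p => (1 - t) * p.1 + t * p.2)) ∧ π = π' :=
  inverse_FM_unique_of_dense_times_general p₀ p₁ hexp π π' hπ0 hπ1 hπ'0 hπ'1 T hTdense h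
end
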